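/- Let F : ℝ^d → ℝ be twice differentiable with L₂-Lipschitz Hessian. Fix x, g ∈ ℝ^d, a symmetric matrix H ∈ ℝ^{d×d}, M ≥ 4L₂ and η > 0. Define m_x(y) := F(x) + ⟨g, y − x⟩ + (1/2)⟨y − x, H(y − x)⟩ + (M/6)‖y − x‖³, and let y be a minimizer of m_x over the closed Euclidean ball of radius η centered at x. If ‖∇F(y)‖ ≥ Mη²/2, then 1 ≤ (2/η²)·‖y − x‖² + (2/(Mη²))·(‖∇F(x) − g‖ + η·‖∇²F(x) − H‖_op). -/

import Mathlib

open scoped RealInnerProductSpace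

/-! If `y` lies on the boundary sphere, `2‖y - x‖² / η² = 2` already. Otherwise `y` is an interior,
hence local, minimizer of the model, so the model's gradient
`g + H (y - x) + (M/2)‖y - x‖ (y - x)` vanishes and `‖g + H (y - x)‖ = (M/2)‖y - x‖²`. Writing
`∇F(y)` as the Taylor remainder (at most `L₂‖y - x‖²`) plus `(∇²F(x) - H)(y - x)` plus
`∇F(x) - g` plus `g + H (y - x)` gives
`‖∇F(y)‖ ≤ (3M/4)‖y - x‖² + ‖∇F(x) - g‖ + η‖∇²F(x) - H‖`, which rearranges to the claim. -/

section CubicModel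

variable {E : Type*} [NormedAddCommGroup E] [InnerProductSpace ℝ E]

noncomputable def cubicModel (c : ℝ) (g : E) (H : E →L[ℝ] E) (M : ℝ) (x z : E) : ℝ :=
  c + ⟪g, z - x⟫ + (1 / 2) * ⟪z - x, H (z - x)⟫ + M / 6 * ‖z - x‖ ^ 3

theorem hasFDerivAt_norm_sub_pow_three (x z : E) :
    HasFDerivAt (fun w : E => ‖w - x‖ ^ 3) ((3 * ‖z - x‖) • innerSL ℝ (z - x)) z := by
  have h := (hasFDerivAt_norm_rpow (z - x) (by norm_num : (1 : ℝ) < 3)).comp z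
    ((hasFDerivAt_id z).sub_const x)
  norm_num [Function.comp_def] at h ⊢
  exact h

theorem hasFDerivAt_cubicModel (c : ℝ) (g : E) {H : E →L[ℝ] E}
    (hH : (H : E →ₗ[ℝ] E).IsSymmetric) (M : ℝ) (x z : E) :
    HasFDerivAt (cubicModel c g H M x)
      (innerSL ℝ (g + H (z - x) + (M / 2 * ‖z - x‖) • (z - x))) z := by
  have hsub : HasFDerivAt (fun w : E => w - x) (ContinuousLinearMap.id ℝ E) z :=
    (hasFDerivAt_id z).sub_const x
  have hm := (((hasFDerivAt_const c z).add (((innerSL ℝ g).hasFDerivAt).comp z hsub)).add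
    ((hsub.inner ℝ ((H.hasFDerivAt).comp z hsub)).const_mul (1 / 2))).add
    ((hasFDerivAt_norm_sub_pow_three x z).const_mul (M / 6))
  refine hm.congr_fderiv ?_
  ext v
  have hHv : ⟪z - x, H v⟫ = ⟪v, H (z - x)⟫ := (hH (z - x) v).symm.trans (real_inner_comm _ _)
  simp only [add_apply, zero_apply, smul_apply, ContinuousLinearMap.comp_apply,
    ContinuousLinearMap.prod_apply, ContinuousLinearMap.id_apply, Function.comp_apply,
    fderivInnerCLM_apply, innerSL_apply_apply, smul_eq_mul, inner_add_left,
    real_inner_smul_left, real_inner_comm v (H (z - x)), hHv]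
  ring

theorem IsLocalMin.cubicModel_gradient_eq_zero {c : ℝ} {g : E} {H : E →L[ℝ] E}
    (hH : (H : E →ₗ[ℝ] E).IsSymmetric) {M : ℝ} {x y : E}
    (hy : IsLocalMin (cubicModel c g H M x) y) :
    g + H (y - x) + (M / 2 * ‖y - x‖) • (y - x) = 0 := by
  have h := congrArg (fun φ : E →L[ℝ] ℝ => φ (g + H (y - x) + (M / 2 * ‖y - x‖) • (y - x)))
    (hy.hasFDerivAt_eq_zero (hasFDerivAt_cubicModel c g hH M x y))
  exact inner_self_eq_zero.mp h

theorem IsLocalMin.cubicModel_norm_add_apply_sub {c : ℝ} {g : E} {H : E →L[ℝ] E}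
    (hH : (H : E →ₗ[ℝ] E).IsSymmetric) {M : ℝ} (hM : 0 ≤ M) {x y : E}
    (hy : IsLocalMin (cubicModel c g H M x) y) :
    ‖g + H (y - x)‖ = M / 2 * ‖y - x‖ ^ 2 := by
  rw [eq_neg_of_add_eq_zero_left (hy.cubicModel_gradient_eq_zero hH), norm_neg, norm_smul,
    Real.norm_of_nonneg (by positivity)]
  ring

end CubicModel

theorem norm_sub_sub_fderiv_le_of_lipschitz {E F : Type*} [NormedAddCommGroup E]
    [NormedSpace ℝ E] [NormedAddCommGroup F] [NormedSpace ℝ F] {f : E → F}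
    {f' : E → E →L[ℝ] F} {L : ℝ} (hL : 0 ≤ L) (hf : ∀ z, HasFDerivAt f (f' z) z)
    (hlip : ∀ z w, ‖f' z - f' w‖ ≤ L * ‖z - w‖) (x y : E) :
    ‖f y - f x - f' x (y - x)‖ ≤ L * ‖y - x‖ ^ 2 := by
  have h := (convex_segment x y).norm_image_sub_le_of_norm_hasFDerivWithin_le'
    (fun z _ => (hf z).hasFDerivWithinAt) (fun z hz => (hlip z x).trans
      (mul_le_mul_of_nonneg_left (norm_sub_le_of_mem_segment hz) hL))
    (left_mem_segment ℝ x y) (right_mem_segment ℝ x y)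
  rwa [mul_assoc, ← sq] at h

theorem IsLocalMin.norm_apply_le_of_cubicModel {E : Type*} [NormedAddCommGroup E]
    [InnerProductSpace ℝ E] {f : E → E} {f' : E → E →L[ℝ] E} {L : ℝ} (hL : 0 ≤ L)
    (hf : ∀ z, HasFDerivAt f (f' z) z) (hlip : ∀ z w, ‖f' z - f' w‖ ≤ L * ‖z - w‖)
    {c : ℝ} {g : E} {H : E →L[ℝ] E} (hH : (H : E →ₗ[ℝ] E).IsSymmetric) {M : ℝ} (hM : 0 ≤ M)
    {x y : E} (hy : IsLocalMin (cubicModel c g H M x) y) :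
    ‖f y‖ ≤ (L + M / 2) * ‖y - x‖ ^ 2 + ‖f x - g‖ + ‖f' x - H‖ * ‖y - x‖ := by
  have hsplit : f y = (f y - f x - f' x (y - x)) + (f' x - H) (y - x) + (f x - g)
      + (g + H (y - x)) := by
    simp only [sub_apply]
    abel
  calc ‖f y‖
      = ‖(f y - f x - f' x (y - x)) + (f' x - H) (y - x) + (f x - g) + (g + H (y - x))‖ :=
        congrArg norm hsplit
    _ ≤ ‖f y - f x - f' x (y - x)‖ + ‖(f' x - H) (y - x)‖ + ‖f x - g‖ + ‖g + H (y - x)‖ :=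
        norm_add₄_le
    _ ≤ L * ‖y - x‖ ^ 2 + ‖f' x - H‖ * ‖y - x‖ + ‖f x - g‖ + M / 2 * ‖y - x‖ ^ 2 := by
        gcongr
        · exact norm_sub_sub_fderiv_le_of_lipschitz hL hf hlip x y
        · exact (f' x - H).le_opNorm _
        · exact (hy.cubicModel_norm_add_apply_sub hH hM).le
    _ = (L + M / 2) * ‖y - x‖ ^ 2 + ‖f x - g‖ + ‖f' x - H‖ * ‖y - x‖ := by ring

theorem stmt_2 {d : ℕ} (F : EuclideanSpace ℝ (Fin d) → ℝ)
    (gradF : EuclideanSpace ℝ (Fin d) → EuclideanSpace ℝ (Fin d))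
    (hessF : EuclideanSpace ℝ (Fin d) →
      EuclideanSpace ℝ (Fin d) →L[ℝ] EuclideanSpace ℝ (Fin d))
    (L₂ : ℝ) (hL₂ : 0 < L₂)
    (hhess : ∀ z, HasFDerivAt gradF (hessF z) z)
    (hlip : ∀ z w, ‖hessF z - hessF w‖ ≤ L₂ * ‖z - w‖)
    (x g : EuclideanSpace ℝ (Fin d))
    (H : EuclideanSpace ℝ (Fin d) →L[ℝ] EuclideanSpace ℝ (Fin d))
    (hHsymm : ∀ v w, ⟪H v, w⟫ = ⟪v, H w⟫)
    (M η : ℝ) (hM : M ≥ 4 * L₂) (hη : 0 < η)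
    (y : EuclideanSpace ℝ (Fin d))
    (hy_mem : y ∈ Metric.closedBall x η)
    (hy_min : IsMinOn
      (fun z => F x + ⟪g, z - x⟫ + (1 / 2) * ⟪z - x, H (z - x)⟫ + M / 6 * ‖z - x‖ ^ 3)
      (Metric.closedBall x η) y)
    (hgrad_y : ‖gradF y‖ ≥ M * η ^ 2 / 2) :
    1 ≤ 2 / η ^ 2 * ‖y - x‖ ^ 2
      + 2 / (M * η ^ 2) * (‖gradF x - g‖ + η * ‖hessF x - H‖) := by
  have hM₀ : 0 < M := by linarith
  have hrη : ‖y - x‖ ≤ η := mem_closedBall_iff_norm.mp hy_mem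
  rcases hrη.eq_or_lt with hr | hr
  · have : 2 / η ^ 2 * ‖y - x‖ ^ 2 = 2 := by rw [hr]; field_simp
    rw [this]
    linarith [show 0 ≤ 2 / (M * η ^ 2) * (‖gradF x - g‖ + η * ‖hessF x - H‖) by positivity]
  · have hloc : IsLocalMin (cubicModel (F x) g H M x) y :=
      hy_min.isLocalMin (Metric.closedBall_mem_nhds_of_mem (mem_ball_iff_norm.mpr hr))
    have hbound := hloc.norm_apply_le_of_cubicModel hL₂.le hhess hlip hHsymm hM₀.le
    have hE : ‖hessF x - H‖ * ‖y - x‖ ≤ ‖hessF x - H‖ * η := by gcongr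
    have hkey : M * η ^ 2 ≤ 2 * M * ‖y - x‖ ^ 2 + 2 * (‖gradF x - g‖ + η * ‖hessF x - H‖) := by
      nlinarith [mul_nonneg hM₀.le (sq_nonneg ‖y - x‖), sq_nonneg ‖y - x‖]
    calc 1 = M * η ^ 2 / (M * η ^ 2) := (div_self (by positivity)).symm
      _ ≤ (2 * M * ‖y - x‖ ^ 2 + 2 * (‖gradF x - g‖ + η * ‖hessF x - H‖)) / (M * η ^ 2) := by
        gcongr
      _ = _ := by field_simp
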